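/- Let a, b be nonzero integers. The self-map of the unit sphere S³ ⊂ ℂ² given by normalizing (z, w) ↦ (z^a', w^b'), where z^{a'} denotes z^a if a > 0 and conj(z)^{|a|} if a < 0 (similarly for b), has topological degree a·b. -/

import Mathlib

/-!
Away from the origin of `ℂ²`, a coordinatewise map `f × g` factors as
`(f × id) ∘ σ ∘ (g × id) ∘ σ`, where `σ` is the coordinate swap. The swap is homotopic to the
identity through invertible linear maps: those fixing the diagonal and multiplying the
antidiagonal by `exp (π i t)`. Hence `(z, w) ↦ (z^{a'}, w^{b'})` is homotopic on `ℂ² ∖ 0` to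
`(z, w) ↦ ((z^{b'})^{a'}, w) = (z^{(ab)'}, w)`; restricting to the sphere and normalizing
preserves the homotopy.
-/

/-- `zPow n z` is `z^n` for `n > 0` and `conj(z)^{|n|}` for `n < 0`. -/
noncomputable def zPow (n : ℤ) (z : ℂ) : ℂ :=
  if 0 ≤ n then z ^ n.toNat else (starRingEnd ℂ z) ^ (-n).toNat

open Metric ContinuousMap

lemma zPow_of_nonneg {n : ℤ} (hn : 0 ≤ n) (z : ℂ) : zPow n z = z ^ n.natAbs := by
  rw [zPow, if_pos hn]
  congr 1
  omega

lemma zPow_of_nonpos {n : ℤ} (hn : n ≤ 0) (z : ℂ) : zPow n z = starRingEnd ℂ z ^ n.natAbs := by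
  rcases hn.lt_or_eq with hn | rfl
  · rw [zPow, if_neg hn.not_ge]
    congr 1
    omega
  · simp [zPow]

lemma zPow_zPow (a b : ℤ) (z : ℂ) : zPow a (zPow b z) = zPow (a * b) z := by
  rcases le_total 0 a with ha | ha <;> rcases le_total 0 b with hb | hb
  · rw [zPow_of_nonneg ha, zPow_of_nonneg hb, zPow_of_nonneg (mul_nonneg ha hb)]
    rw [← pow_mul, Int.natAbs_mul, mul_comm]
  · rw [zPow_of_nonneg ha, zPow_of_nonpos hb, zPow_of_nonpos (mul_nonpos_of_nonneg_of_nonpos ha hb)]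
    rw [← pow_mul, Int.natAbs_mul, mul_comm]
  · rw [zPow_of_nonpos ha, zPow_of_nonneg hb, zPow_of_nonpos (mul_nonpos_of_nonpos_of_nonneg ha hb)]
    rw [map_pow, ← pow_mul, Int.natAbs_mul, mul_comm]
  · rw [zPow_of_nonpos ha, zPow_of_nonpos hb, zPow_of_nonneg (mul_nonneg_of_nonpos_of_nonpos ha hb)]
    rw [map_pow, Complex.conj_conj, ← pow_mul, Int.natAbs_mul, mul_comm]

@[fun_prop] lemma continuous_zPow (n : ℤ) : Continuous (zPow n) := by
  unfold zPow
  split_ifs <;> fun_prop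

lemma eq_zero_of_zPow_eq_zero {n : ℤ} {z : ℂ} (h : zPow n z = 0) : z = 0 := by
  unfold zPow at h
  split_ifs at h
  · exact eq_zero_of_pow_eq_zero h
  · exact (map_eq_zero _).1 (eq_zero_of_pow_eq_zero h)

section PuncturedSquare

variable {X : Type*} [TopologicalSpace X] [Zero X]

def puncturedProdMap (f g : C(X, X)) (hf : ∀ x, f x = 0 → x = 0) (hg : ∀ y, g y = 0 → y = 0) :
    C(({0}ᶜ : Set (X × X)), ({0}ᶜ : Set (X × X))) where
  toFun p := ⟨Prod.map f g p, fun h => p.2 (Prod.ext (hf _ congr($h.1)) (hg _ congr($h.2)))⟩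

variable (X) in
def puncturedSwap : C(({0}ᶜ : Set (X × X)), ({0}ᶜ : Set (X × X))) where
  toFun p := ⟨p.1.swap, fun h => p.2 (by simpa using congrArg Prod.swap h)⟩

lemma puncturedProdMap_eq_comp_swap (f g : C(X, X)) (hf : ∀ x, f x = 0 → x = 0)
    (hg : ∀ y, g y = 0 → y = 0) :
    puncturedProdMap f g hf hg = (puncturedProdMap f (.id X) hf fun _ => id).comp
      ((puncturedSwap X).comp
        ((puncturedProdMap g (.id X) hg fun _ => id).comp (puncturedSwap X))) :=
  rfl

end PuncturedSquare

section ComplexPuncturedSquare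

variable {E : Type*} [NormedAddCommGroup E] [NormedSpace ℂ E]

noncomputable def scaleAntidiagonal (q : ℂ) (p : E × E) : E × E :=
  ((2 : ℂ)⁻¹ • (p.1 + p.2 + q • (p.1 - p.2)), (2 : ℂ)⁻¹ • (p.1 + p.2 - q • (p.1 - p.2)))

@[fun_prop] lemma continuous_scaleAntidiagonal :
    Continuous fun qp : ℂ × (E × E) => scaleAntidiagonal qp.1 qp.2 := by
  unfold scaleAntidiagonal
  fun_prop

lemma scaleAntidiagonal_one (p : E × E) : scaleAntidiagonal 1 p = p := by
  ext <;> simp only [scaleAntidiagonal] <;> module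

lemma scaleAntidiagonal_neg_one (p : E × E) : scaleAntidiagonal (-1) p = p.swap := by
  ext <;> simp only [scaleAntidiagonal, Prod.fst_swap, Prod.snd_swap] <;> module

lemma eq_zero_of_scaleAntidiagonal_eq_zero {q : ℂ} (hq : q ≠ 0) {p : E × E}
    (h : scaleAntidiagonal q p = 0) : p = 0 := by
  obtain ⟨h₁, h₂⟩ := Prod.mk_eq_zero.1 h
  rw [smul_eq_zero_iff_right (by norm_num)] at h₁ h₂
  have hs : p.1 + p.2 = 0 := by linear_combination (norm := module) (2 : ℂ)⁻¹ • (h₁ + h₂)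
  have hd : p.1 - p.2 = 0 := (smul_eq_zero_iff_right hq).1 <| by
    linear_combination (norm := module) (2 : ℂ)⁻¹ • (h₁ - h₂)
  refine Prod.ext ?_ ?_ <;> simp only [Prod.fst_zero, Prod.snd_zero]
  · linear_combination (norm := module) (2 : ℂ)⁻¹ • (hs + hd)
  · linear_combination (norm := module) (2 : ℂ)⁻¹ • (hs - hd)

variable (E) in
theorem puncturedSwap_homotopic_id : (puncturedSwap E).Homotopic (ContinuousMap.id _) := by
  refine Homotopic.symm ⟨{
    toFun tp := ⟨scaleAntidiagonal (Complex.exp (Real.pi * Complex.I * tp.1)) tp.2.1,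
      fun h => tp.2.2 (eq_zero_of_scaleAntidiagonal_eq_zero (Complex.exp_ne_zero _) h)⟩
    continuous_toFun := by fun_prop
    map_zero_left p := by ext1; simp [scaleAntidiagonal_one]
    map_one_left p := by
      ext1; simp [Complex.exp_pi_mul_I, scaleAntidiagonal_neg_one, puncturedSwap] }⟩

theorem puncturedProdMap_homotopic_comp (f g h : C(E, E)) (hf : ∀ x, f x = 0 → x = 0)
    (hg : ∀ y, g y = 0 → y = 0) (hh : ∀ x, h x = 0 → x = 0) (hfg : f.comp g = h) :
    (puncturedProdMap f g hf hg).Homotopic (puncturedProdMap h (.id E) hh fun _ => id) := by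
  subst hfg
  rw [puncturedProdMap_eq_comp_swap]
  exact (Homotopic.refl _).comp ((puncturedSwap_homotopic_id E).comp
    ((Homotopic.refl _).comp (puncturedSwap_homotopic_id E)))

end ComplexPuncturedSquare

section Normalization

variable {E : Type*} [NormedAddCommGroup E] [NormedSpace ℝ E]

variable (E) in
def sphereToPunctured : C(sphere (0 : E) 1, ({0}ᶜ : Set E)) where
  toFun v := ⟨v, ne_zero_of_mem_unit_sphere v⟩

variable (E) in
noncomputable def normalizePunctured : C(({0}ᶜ : Set E), sphere (0 : E) 1) where
  toFun x := ⟨‖(x : E)‖⁻¹ • (x : E), mem_sphere_zero_iff_norm.2 (norm_smul_inv_norm x.2)⟩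
  continuous_toFun :=
    ((continuous_subtype_val.norm.inv₀ fun x => norm_ne_zero_iff.2 x.2).smul
      continuous_subtype_val).subtype_mk _

end Normalization

theorem joined_power_map_degree_general (a b : ℤ) :
    ∃ F M : C(Metric.sphere (0 : ℂ × ℂ) 1, Metric.sphere (0 : ℂ × ℂ) 1),
      (∀ v : Metric.sphere (0 : ℂ × ℂ) 1,
        (F v : ℂ × ℂ) = ‖((zPow a (v : ℂ × ℂ).1, zPow b (v : ℂ × ℂ).2) : ℂ × ℂ)‖⁻¹ •
          (zPow a (v : ℂ × ℂ).1, zPow b (v : ℂ × ℂ).2)) ∧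
      (∀ v : Metric.sphere (0 : ℂ × ℂ) 1,
        (M v : ℂ × ℂ) = ‖((zPow (a * b) (v : ℂ × ℂ).1, (v : ℂ × ℂ).2) : ℂ × ℂ)‖⁻¹ •
          (zPow (a * b) (v : ℂ × ℂ).1, (v : ℂ × ℂ).2)) ∧
      F.Homotopic M := by
  let P (m : ℤ) : C(ℂ, ℂ) := ⟨zPow m, continuous_zPow m⟩
  have hP (m : ℤ) : ∀ z, P m z = 0 → z = 0 := fun _ => eq_zero_of_zPow_eq_zero
  have hPP : (P a).comp (P b) = P (a * b) := ext fun z => zPow_zPow a b z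
  refine ⟨(normalizePunctured _).comp
      ((puncturedProdMap (P a) (P b) (hP a) (hP b)).comp (sphereToPunctured _)),
    (normalizePunctured _).comp
      ((puncturedProdMap (P (a * b)) (.id ℂ) (hP _) fun _ => id).comp (sphereToPunctured _)),
    fun v => rfl, fun v => rfl, ?_⟩
  exact (Homotopic.refl _).comp
    ((puncturedProdMap_homotopic_comp _ _ _ _ _ _ hPP).comp (Homotopic.refl _))

/-- For nonzero integers `a, b`, the self-map of the unit sphere
`S³ ⊂ ℂ²` obtained by normalizing `(z,w) ↦ (z^{a'}, w^{b'})` (with `z^{a'} = z^a` for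
`a > 0` and `conj(z)^{|a|}` for `a < 0`, and similarly for `b`) has topological degree
`a·b`.  Having degree `a·b` is formalized as: the map is homotopic to the reference
self-map of degree `a·b`, namely the normalization of `(z,w) ↦ (z^{(ab)'}, w)`. -/
theorem joined_power_map_degree (a b : ℤ) (ha : a ≠ 0) (hb : b ≠ 0) :
    ∃ F M : C(Metric.sphere (0 : ℂ × ℂ) 1, Metric.sphere (0 : ℂ × ℂ) 1),
      (∀ v : Metric.sphere (0 : ℂ × ℂ) 1,
        (F v : ℂ × ℂ) = ‖((zPow a (v : ℂ × ℂ).1, zPow b (v : ℂ × ℂ).2) : ℂ × ℂ)‖⁻¹ •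
          (zPow a (v : ℂ × ℂ).1, zPow b (v : ℂ × ℂ).2)) ∧
      (∀ v : Metric.sphere (0 : ℂ × ℂ) 1,
        (M v : ℂ × ℂ) = ‖((zPow (a * b) (v : ℂ × ℂ).1, (v : ℂ × ℂ).2) : ℂ × ℂ)‖⁻¹ •
          (zPow (a * b) (v : ℂ × ℂ).1, (v : ℂ × ℂ).2)) ∧
      F.Homotopic M :=
  joined_power_map_degree_general a b
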